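/- (Duality under double normalization.) Let K be a real M×N matrix all of whose rows and all of whose columns have unit Euclidean norm. With L_c(K) = ‖KᵀK − diag(KᵀK)‖_F² and L_nc(K) = ‖KKᵀ − diag(KKᵀ)‖_F², one has L_nc(K) = L_c(K) + N − M. -/
import Mathlib


open Matrix Finset

/-- Squared Frobenius norm of a real matrix: `‖A‖_F² = Σ_{i,j} A_{ij}²`. -/
def frobSq {m n : ℕ} (A : Matrix (Fin m) (Fin n) ℝ) : ℝ :=
  ∑ i, ∑ j, (A i j) ^ 2

lemma frobSq_sub_diag {m : ℕ} (A : Matrix (Fin m) (Fin m) ℝ) :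
    frobSq (A - Matrix.diagonal (fun i => A i i))
      = frobSq A - ∑ i, (A i i) ^ 2 := by
  unfold frobSq
  rw [← Finset.sum_sub_distrib]
  refine Finset.sum_congr rfl fun i _ => ?_
  have : ∀ j, ((A - Matrix.diagonal (fun k => A k k)) i j) ^ 2
      = (A i j) ^ 2 - (if j = i then (A i i) ^ 2 else 0) := by
    intro j
    by_cases h : i = j
    · subst h; simp [Matrix.sub_apply, Matrix.diagonal_apply]
    · simp [Matrix.sub_apply, Matrix.diagonal_apply, h, Ne.symm h]
  simp only [this, Finset.sum_sub_distrib, Finset.sum_ite_eq', Finset.mem_univ, if_true]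

lemma frobSq_eq_trace {m n : ℕ} (A : Matrix (Fin m) (Fin n) ℝ) :
    frobSq A = Matrix.trace (A * Aᵀ) := by
  simp [frobSq, Matrix.trace, Matrix.mul_apply, Matrix.diag, sq]

lemma trace_identity {m n : ℕ} (K : Matrix (Fin m) (Fin n) ℝ) :
    frobSq (K * Kᵀ) = frobSq (Kᵀ * K) := by
  rw [frobSq_eq_trace, frobSq_eq_trace]
  simp only [Matrix.transpose_mul, Matrix.transpose_transpose]
  rw [show K * Kᵀ * (K * Kᵀ) = K * (Kᵀ * (K * Kᵀ)) from Matrix.mul_assoc _ _ _,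
    Matrix.trace_mul_comm]
  simp only [← Matrix.mul_assoc]

/-- **Duality under double normalization.** If every row and
every column of the real `M×N` matrix `K` has unit Euclidean norm, then with
`L_c(K) = ‖KᵀK − diag(KᵀK)‖_F²` and `L_nc(K) = ‖KKᵀ − diag(KKᵀ)‖_F²`,
`L_nc(K) = L_c(K) + N − M`. -/
theorem stmt_10 (M N : ℕ) (K : Matrix (Fin M) (Fin N) ℝ)
    (hrow : ∀ j : Fin M, ∑ i : Fin N, (K j i) ^ 2 = 1)
    (hcol : ∀ i : Fin N, ∑ j : Fin M, (K j i) ^ 2 = 1) :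
    frobSq (K * Kᵀ - Matrix.diagonal (fun j => (K * Kᵀ) j j))
      = frobSq (Kᵀ * K - Matrix.diagonal (fun i => (Kᵀ * K) i i))
        + (N : ℝ) - (M : ℝ) := by
  rw [frobSq_sub_diag, frobSq_sub_diag]
  have hd1 : ∀ j : Fin M, (K * Kᵀ) j j = 1 := fun j => by
    simp [Matrix.mul_apply, ← sq, hrow j]
  have hd2 : ∀ i : Fin N, (Kᵀ * K) i i = 1 := fun i => by
    simp [Matrix.mul_apply, ← sq, hcol i]
  have h1 : ∑ j : Fin M, ((K * Kᵀ) j j) ^ 2 = (M : ℝ) := by simp [hd1]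
  have h2 : ∑ i : Fin N, ((Kᵀ * K) i i) ^ 2 = (N : ℝ) := by simp [hd2]
  have h3 : frobSq (K * Kᵀ) = frobSq (Kᵀ * K) := trace_identity K
  rw [h1, h2, h3]
  ring
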